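/- arXiv:0711.4493 — 2 statements merged into one kernel-verified Lean document; each statement's English description precedes it below -/
import Mathlib

section
/- Let {X_{n,t} : t = 1, …, d_n}, n ∈ ℕ, with d_n → ∞, be a triangular array of real random variables that is row-wise SP(1) with the same period T, i.e., X_{n,t} and X_{n,t+T} have the same distribution whenever both indices lie in {1, …, d_n}. Assume: (i) for each t = 1, …, T, the sequence {X_{n,t}}_n (defined for all n large enough that t ≤ d_n) is uniformly integrable; (ii) for each t = 1, …, T, the limit μ_t = lim_{n→∞} E X_{n,t} exists and is finite; (iii) there exists a triangular array of nonnegative real numbers {a_{n,τ} : τ = 0, …, d_n − 1} with d_n^{−1} Σ_{τ=0}^{d_n−1} a_{n,τ} → 0 as n → ∞, such that for every A > 0, every n, and all indices 1 ≤ t ≤ t + τ ≤ d_n, |Cov(g(X_{n,t}), h(X_{n,t+τ}))| ≤ A² a_{n,τ} for all Borel measurable g, h : ℝ → ℝ with |g| ≤ A and |h| ≤ A (in particular for the truncated variables X 1_{|X| < A}). Then d_n^{−1} Σ_{t=1}^{d_n} X_{n,t} → μ in probability, where μ = T^{−1} Σ_{t=1}^T μ_t. -/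
/-!
Truncate every variable at a level `A`. Uniform integrability of the `T` columns, transported to
the whole row by the `SP(1)` property, makes the truncation error small in `L¹` uniformly in `n`,
so Markov's inequality controls it. The truncated row average has variance at most
`2 A² d_n⁻¹ ∑ τ, a_{n,τ} → 0`, so Chebyshev's inequality controls its fluctuation. Finally the
means `E X_{n,t}` are `T`-periodic in `t`, and each residue class mod `T` has density `1 / T`,
so the averaged means converge to `T⁻¹ ∑ μ_t`.
-/

open MeasureTheory Filter Topology

noncomputable section

variable {Ω : Type*} [MeasurableSpace Ω]

def cov (P : Measure Ω) (f g : Ω → ℝ) : ℝ :=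
  (∫ ω, f ω * g ω ∂P) - (∫ ω, f ω ∂P) * (∫ ω, g ω ∂P)

open ProbabilityTheory Finset

theorem sum_Icc_one_eq_sum_range {M : Type*} [AddCommMonoid M] (f : ℕ → M) (N : ℕ) :
    ∑ t ∈ Icc 1 N, f t = ∑ i ∈ range N, f (i + 1) := by
  rw [range_eq_Ico, sum_Ico_add' f 0 N 1]
  rfl

theorem sum_le_sum_of_injOn {ι κ M : Type*} [AddCommMonoid M] [PartialOrder M]
    [IsOrderedAddMonoid M] {s : Finset ι} {t : Finset κ} {g : ι → κ} {f : κ → M}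
    (hg : Set.InjOn g s) (hgst : ∀ i ∈ s, g i ∈ t) (hf : ∀ j ∈ t, 0 ≤ f j) :
    ∑ i ∈ s, f (g i) ≤ ∑ j ∈ t, f j := by
  classical
  rw [← sum_image hg]
  exact sum_le_sum_of_subset_of_nonneg (image_subset_iff.2 hgst) fun j hj _ => hf j hj

theorem sum_range_comp_mod {M : Type*} [AddCommMonoid M] (w : ℕ → M) {T : ℕ} (hT : 0 < T)
    (N : ℕ) : ∑ i ∈ range N, w (i % T) = ∑ j ∈ range T, #{i ∈ range N | i % T = j} • w j := by
  rw [← sum_fiberwise_of_maps_to (t := range T) fun i _ => mem_range.2 (Nat.mod_lt i hT)]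
  refine sum_congr rfl fun j _ => ?_
  rw [← sum_const]
  exact sum_congr rfl fun i hi => by rw [(mem_filter.1 hi).2]

theorem tendsto_card_filter_mod_eq_div {T j : ℕ} (hj : j < T) :
    Tendsto (fun N : ℕ => (#{i ∈ range N | i % T = j} : ℝ) / N) atTop (𝓝 (T : ℝ)⁻¹) := by
  have hT : 0 < T := j.zero_le.trans_lt hj
  have hTR : (0 : ℝ) < T := by exact_mod_cast hT
  have hcount (N : ℕ) : #{i ∈ range N | i % T = j} = N / T + if j < N % T then 1 else 0 := by
    rw [← Nat.mod_eq_of_lt hj, ← Nat.count_modEq_card N hT, Nat.count_eq_card_filter_range]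
    rfl
  have hclose (N : ℕ) : |(#{i ∈ range N | i % T = j} : ℝ) - N / T| ≤ 1 := by
    have hlow : (N : ℝ) < (N / T : ℕ) * T + T := by exact_mod_cast Nat.lt_div_mul_add hT
    have hup : ((N / T : ℕ) : ℝ) ≤ N / T := Nat.cast_div_le
    have hlow' : (N : ℝ) / T - 1 < (N / T : ℕ) := by
      rw [div_sub_one hTR.ne', div_lt_iff₀ hTR]
      linarith
    rw [hcount, abs_le]
    split_ifs <;> push_cast <;> constructor <;> linarith
  have hbound : ∀ᶠ N : ℕ in atTop,
      ‖(#{i ∈ range N | i % T = j} : ℝ) / N - (T : ℝ)⁻¹‖ ≤ 1 / N := by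
    filter_upwards [eventually_gt_atTop 0] with N hN
    have hNR : (0 : ℝ) < N := by exact_mod_cast hN
    rw [Real.norm_eq_abs, show (T : ℝ)⁻¹ = N / T / N by field_simp, ← sub_div, abs_div,
      abs_of_pos hNR]
    exact div_le_div_of_nonneg_right (hclose N) hNR.le
  exact tendsto_iff_norm_sub_tendsto_zero.2
    (squeeze_zero' (.of_forall fun _ => norm_nonneg _) hbound tendsto_one_div_atTop_nhds_zero_nat)

theorem tendsto_average_mod {w : ℕ → ℕ → ℝ} {v : ℕ → ℝ} {N : ℕ → ℕ} {T : ℕ} (hT : 0 < T)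
    (hN : Tendsto N atTop atTop) (hw : ∀ j < T, Tendsto (fun n => w n j) atTop (𝓝 (v j))) :
    Tendsto (fun n => (N n : ℝ)⁻¹ * ∑ i ∈ range (N n), w n (i % T)) atTop
      (𝓝 ((T : ℝ)⁻¹ * ∑ j ∈ range T, v j)) := by
  simp_rw [sum_range_comp_mod _ hT, mul_sum, nsmul_eq_mul, ← mul_assoc]
  refine tendsto_finsetSum _ fun j hj => ?_
  simpa only [inv_mul_eq_div, Function.comp_def] using
    ((tendsto_card_filter_mod_eq_div (mem_range.1 hj)).comp hN).mul (hw j (mem_range.1 hj))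

section Periodic

variable {P : Measure Ω} {Y : ℕ → Ω → ℝ} {N T : ℕ}

theorem identDistrib_add_mul (hY : ∀ t, Measurable (Y t))
    (hper : ∀ t, 1 ≤ t → t + T ≤ N → P.map (Y t) = P.map (Y (t + T))) {r : ℕ} (hr : 1 ≤ r) :
    ∀ k, r + T * k ≤ N → IdentDistrib (Y (r + T * k)) (Y r) P P
  | 0, _ => IdentDistrib.refl (hY r).aemeasurable
  | k + 1, hk => by
    have hstep : IdentDistrib (Y (r + T * k)) (Y (r + T * k + T)) P P :=
      ⟨(hY _).aemeasurable, (hY _).aemeasurable, hper _ (by omega) (by linarith [mul_add T k 1])⟩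
    rw [mul_add_one, ← add_assoc]
    exact hstep.symm.trans (identDistrib_add_mul hY hper hr k (by linarith [mul_add T k 1]))

theorem identDistrib_mod_period (hY : ∀ t, Measurable (Y t))
    (hper : ∀ t, 1 ≤ t → t + T ≤ N → P.map (Y t) = P.map (Y (t + T))) {t : ℕ} (ht : 1 ≤ t)
    (htN : t ≤ N) : IdentDistrib (Y t) (Y ((t - 1) % T + 1)) P P := by
  have hdecomp : (t - 1) % T + 1 + T * ((t - 1) / T) = t := by
    have := Nat.mod_add_div (t - 1) T
    omega
  have h := identDistrib_add_mul hY hper (Nat.le_add_left 1 _) ((t - 1) / T) (hdecomp ▸ htN)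
  rw [hdecomp] at h
  exact h

end Periodic

theorem measurable_truncation_id (A : ℝ) : Measurable (truncation id A) :=
  measurable_id.indicator measurableSet_Ioc

theorem abs_sub_truncation_le_indicator {α : Type*} (f : α → ℝ) {A₀ A : ℝ} (hA : A₀ ≤ A)
    (x : α) : |f x - truncation f A x| ≤ {y | A₀ ≤ |f y|}.indicator (fun y => |f y|) x := by
  by_cases hx : f x ∈ Set.Ioc (-A) A
  · simp [truncation, hx, Set.indicator_nonneg]
  · have hfx : A ≤ |f x| := by
      rw [Set.mem_Ioc, not_and_or, not_lt, not_le] at hx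
      rcases hx with hx | hx
      · exact le_abs.2 (Or.inr (by linarith))
      · exact le_abs.2 (Or.inl hx.le)
    simp [truncation, hx, Set.indicator_of_mem (show x ∈ {y | A₀ ≤ |f y|} from hA.trans hfx)]

theorem integral_abs_sub_truncation_le {P : Measure Ω} [IsFiniteMeasure P] {f : Ω → ℝ}
    (hf : Integrable f P) (hfm : Measurable f) {A₀ A : ℝ} (hA : A₀ ≤ A) :
    ∫ ω, |f ω - truncation f A ω| ∂P ≤ ∫ ω in {ω | A₀ ≤ |f ω|}, |f ω| ∂P := by
  have hset : MeasurableSet {ω | A₀ ≤ |f ω|} := measurableSet_le measurable_const hfm.abs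
  rw [← integral_indicator hset]
  exact integral_mono (hf.sub hf.1.integrable_truncation).abs (hf.abs.indicator hset)
    (abs_sub_truncation_le_indicator f hA)

theorem covariance_eq_cov {P : Measure Ω} [IsProbabilityMeasure P] {f g : Ω → ℝ}
    (hf : MemLp f 2 P) (hg : MemLp g 2 P) : cov[f, g; P] = cov P f g :=
  covariance_eq_sub hf hg

theorem sum_Icc_dist_le {b : ℕ → ℝ} {N t : ℕ} (hb : ∀ τ < N, 0 ≤ b τ) (ht : t ∈ Icc 1 N) :
    ∑ u ∈ Icc 1 N, b (Nat.dist t u) ≤ 2 * ∑ τ ∈ range N, b τ := by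
  have hb' : ∀ τ ∈ range N, 0 ≤ b τ := fun τ hτ => hb τ (mem_range.1 hτ)
  rw [mem_Icc] at ht
  rw [← sum_filter_add_sum_filter_not _ (t ≤ ·), two_mul]
  gcongr
  all_goals
    refine sum_le_sum_of_injOn (fun u hu u' hu' h => ?_) (fun u hu => ?_) hb'
    <;> simp only [coe_filter, Set.mem_ofPred_eq, mem_filter, mem_Icc, mem_range, Nat.dist] at *
    <;> omega

theorem variance_average_le {P : Measure Ω} [IsProbabilityMeasure P] {Y : ℕ → Ω → ℝ} {N : ℕ}
    {b : ℕ → ℝ} (hY : ∀ t ∈ Icc 1 N, MemLp (Y t) 2 P)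
    (hcov : ∀ t τ, 1 ≤ t → t + τ ≤ N → |cov P (Y t) (Y (t + τ))| ≤ b τ) :
    Var[fun ω => (N : ℝ)⁻¹ * ∑ t ∈ Icc 1 N, Y t ω; P] ≤ 2 * ((N : ℝ)⁻¹ * ∑ τ ∈ range N, b τ) := by
  have hb : ∀ τ < N, 0 ≤ b τ := fun τ hτ => (abs_nonneg _).trans (hcov 1 τ le_rfl (by omega))
  have hle : ∀ t ∈ Icc 1 N, ∀ u ∈ Icc 1 N, t ≤ u → cov[Y t, Y u; P] ≤ b (Nat.dist t u) := by
    intro t ht u hu htu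
    obtain ⟨τ, rfl⟩ := Nat.exists_eq_add_of_le htu
    rw [covariance_eq_cov (hY t ht) (hY _ hu), show Nat.dist t (t + τ) = τ by simp [Nat.dist]]
    exact (le_abs_self _).trans (hcov t τ (mem_Icc.1 ht).1 (mem_Icc.1 hu).2)
  have hdist : ∀ t ∈ Icc 1 N, ∀ u ∈ Icc 1 N, cov[Y t, Y u; P] ≤ b (Nat.dist t u) := by
    intro t ht u hu
    rcases le_total t u with htu | hut
    · exact hle t ht u hu htu
    · rw [covariance_comm, Nat.dist_comm]
      exact hle u hu t ht hut
  calc Var[fun ω => (N : ℝ)⁻¹ * ∑ t ∈ Icc 1 N, Y t ω; P]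
      = (N : ℝ)⁻¹ ^ 2 * ∑ t ∈ Icc 1 N, ∑ u ∈ Icc 1 N, cov[Y t, Y u; P] := by
        rw [variance_const_mul, variance_fun_sum' hY]
    _ ≤ (N : ℝ)⁻¹ ^ 2 * ∑ t ∈ Icc 1 N, 2 * ∑ τ ∈ range N, b τ := by
        gcongr with t ht
        exact (sum_le_sum (hdist t ht)).trans (sum_Icc_dist_le hb ht)
    _ = 2 * ((N : ℝ)⁻¹ * ∑ τ ∈ range N, b τ) := by
        rcases N.eq_zero_or_pos with rfl | hN
        · simp
        · rw [sum_const, Nat.card_Icc, Nat.add_sub_cancel, nsmul_eq_mul]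
          field_simp

theorem measure_ge_le_ofReal_integral_div {P : Measure Ω} [IsFiniteMeasure P] {f : Ω → ℝ}
    (hf₀ : 0 ≤ᵐ[P] f) (hf : Integrable f P) {c : ℝ} (hc : 0 < c) :
    P {ω | c ≤ f ω} ≤ ENNReal.ofReal ((∫ ω, f ω ∂P) / c) := by
  rw [← ofReal_measureReal]
  refine ENNReal.ofReal_le_ofReal ((le_div_iff₀ hc).2 ?_)
  rw [mul_comm]
  exact mul_meas_ge_le_integral_of_nonneg hf₀ hf c

theorem measure_abs_sub_ge_le_add (P : Measure Ω) (S S' : Ω → ℝ) {μ m ε : ℝ}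
    (hm : |m - μ| < ε / 2) :
    P {ω | ε ≤ |S ω - μ|} ≤ P {ω | ε / 4 ≤ |S ω - S' ω|} + P {ω | ε / 4 ≤ |S' ω - m|} := by
  refine (measure_mono fun ω hω => ?_).trans (measure_union_le _ _)
  by_contra h
  simp only [Set.mem_union, Set.mem_ofPred_eq, not_or, not_le] at hω h
  have := abs_sub_le (S ω) (S' ω) μ
  have := abs_sub_le (S' ω) m μ
  linarith

theorem integral_abs_average_le {P : Measure Ω} {Z : ℕ → Ω → ℝ} {s : Finset ℕ} {η : ℝ}
    (hη : 0 ≤ η) (hZ : ∀ t ∈ s, Integrable (Z t) P) (hZη : ∀ t ∈ s, ∫ ω, |Z t ω| ∂P ≤ η) :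
    ∫ ω, |(#s : ℝ)⁻¹ * ∑ t ∈ s, Z t ω| ∂P ≤ η := by
  have hZabs : Integrable (fun ω => (#s : ℝ)⁻¹ * ∑ t ∈ s, |Z t ω|) P :=
    (integrable_finsetSum _ fun t ht => (hZ t ht).abs).const_mul _
  calc ∫ ω, |(#s : ℝ)⁻¹ * ∑ t ∈ s, Z t ω| ∂P
      ≤ ∫ ω, (#s : ℝ)⁻¹ * ∑ t ∈ s, |Z t ω| ∂P := by
        refine integral_mono_of_nonneg (.of_forall fun _ => abs_nonneg _) hZabs
          (.of_forall fun ω => ?_)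
        dsimp only
        rw [abs_mul, abs_of_nonneg (by positivity)]
        gcongr
        exact abs_sum_le_sum_abs _ _
    _ = (#s : ℝ)⁻¹ * ∑ t ∈ s, ∫ ω, |Z t ω| ∂P := by
        rw [integral_const_mul, integral_finsetSum _ fun t ht => (hZ t ht).abs]
    _ ≤ (#s : ℝ)⁻¹ * ∑ t ∈ s, η := by gcongr with t ht; exact hZη t ht
    _ ≤ η := by
        rw [sum_const, nsmul_eq_mul, ← mul_assoc]
        rcases s.eq_empty_or_nonempty with rfl | hs
        · simpa using hη
        · rw [inv_mul_cancel₀ (by positivity), one_mul]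

theorem measure_abs_average_sub_ge_le {P : Measure Ω} [IsProbabilityMeasure P]
    {X : ℕ → Ω → ℝ} {N : ℕ} {A η ε μ : ℝ} {b : ℕ → ℝ}
    (hX : ∀ t ∈ Icc 1 N, Integrable (X t) P)
    (htrunc : ∀ t ∈ Icc 1 N, ∫ ω, |X t ω - truncation (X t) A ω| ∂P ≤ η)
    (hcov : ∀ t τ, 1 ≤ t → t + τ ≤ N →
      |cov P (truncation (X t) A) (truncation (X (t + τ)) A)| ≤ b τ)
    (hε : 0 < ε) (hη : 0 ≤ η)
    (hmean : |(N : ℝ)⁻¹ * ∑ t ∈ Icc 1 N, ∫ ω, X t ω ∂P - μ| + η < ε / 2) :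
    P {ω | ε ≤ |(N : ℝ)⁻¹ * ∑ t ∈ Icc 1 N, X t ω - μ|} ≤
      ENNReal.ofReal (η / (ε / 4)) +
        ENNReal.ofReal (2 * ((N : ℝ)⁻¹ * ∑ τ ∈ range N, b τ) / (ε / 4) ^ 2) := by
  set S : Ω → ℝ := fun ω => (N : ℝ)⁻¹ * ∑ t ∈ Icc 1 N, X t ω
  set S' : Ω → ℝ := fun ω => (N : ℝ)⁻¹ * ∑ t ∈ Icc 1 N, truncation (X t) A ω
  have hY : ∀ t ∈ Icc 1 N, MemLp (truncation (X t) A) 2 P :=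
    fun t ht => (hX t ht).1.memLp_truncation
  have hS : Integrable S P := (integrable_finsetSum _ hX).const_mul _
  have hS' : MemLp S' 2 P := (memLp_finsetSum _ hY).const_mul _
  have hL1 : ∫ ω, |S ω - S' ω| ∂P ≤ η := by
    have := integral_abs_average_le hη
      (fun t ht => (hX t ht).sub ((hY t ht).integrable one_le_two)) htrunc
    simpa only [Nat.card_Icc, Nat.add_sub_cancel, Pi.sub_apply, sum_sub_distrib, mul_sub]
      using this
  have hm : |∫ ω, S' ω ∂P - μ| < ε / 2 := by
    have hES : ∫ ω, S ω ∂P = (N : ℝ)⁻¹ * ∑ t ∈ Icc 1 N, ∫ ω, X t ω ∂P := by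
      rw [integral_const_mul, integral_finsetSum _ hX]
    have hSS' : |∫ ω, S' ω ∂P - ∫ ω, S ω ∂P| ≤ η := by
      rw [← integral_sub (hS'.integrable one_le_two) hS]
      refine (abs_integral_le_integral_abs).trans ?_
      simpa only [abs_sub_comm] using hL1
    have := abs_sub_le (∫ ω, S' ω ∂P) (∫ ω, S ω ∂P) μ
    rw [hES] at hSS' this
    linarith
  calc P {ω | ε ≤ |S ω - μ|}
      ≤ P {ω | ε / 4 ≤ |S ω - S' ω|} + P {ω | ε / 4 ≤ |S' ω - ∫ ω, S' ω ∂P|} :=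
        measure_abs_sub_ge_le_add P S S' hm
    _ ≤ ENNReal.ofReal ((∫ ω, |S ω - S' ω| ∂P) / (ε / 4)) +
          ENNReal.ofReal (Var[S'; P] / (ε / 4) ^ 2) :=
        add_le_add
          (measure_ge_le_ofReal_integral_div (.of_forall fun _ => abs_nonneg _)
            (hS.sub (hS'.integrable one_le_two)).abs (by positivity))
          (meas_ge_le_variance_div_sq hS' (by positivity))
    _ ≤ _ := by
        gcongr
        exact variance_average_le hY hcov

theorem ENNReal.tendsto_nhds_zero_of_eventually_le_add {α : Type*} {l : Filter α}
    {f : α → ENNReal}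
    (h : ∀ δ : ℝ, 0 < δ → ∃ g : α → ENNReal, Tendsto g l (𝓝 0) ∧
      ∀ᶠ x in l, f x ≤ ENNReal.ofReal δ + g x) :
    Tendsto f l (𝓝 0) := by
  refine ENNReal.tendsto_nhds_zero.2 fun e he => ?_
  have he2 : 0 < e / 2 := ENNReal.half_pos he.ne'
  obtain ⟨δ, -, hδ, hδe⟩ := ENNReal.lt_iff_exists_real_btwn.1 he2
  obtain ⟨g, hg, hfg⟩ := h δ (ENNReal.ofReal_pos.1 hδ)
  filter_upwards [hfg, ENNReal.tendsto_nhds_zero.1 hg _ he2] with x hfx hgx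
  calc f x ≤ ENNReal.ofReal δ + g x := hfx
    _ ≤ e / 2 + e / 2 := add_le_add hδe.le hgx
    _ = e := ENNReal.add_halves e

section TriangularArray

variable {P : Measure Ω} {d : ℕ → ℕ} {X : ℕ → ℕ → Ω → ℝ} {T : ℕ}

theorem exists_truncation_level [IsFiniteMeasure P] (hT : 0 < T)
    (hXm : ∀ n t, Measurable (X n t))
    (hint : ∀ n t, 1 ≤ t → t ≤ d n → Integrable (X n t) P)
    (hSP1 : ∀ n t, 1 ≤ t → t + T ≤ d n →
      Measure.map (X n t) P = Measure.map (X n (t + T)) P)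
    (hUI : ∀ t, 1 ≤ t → t ≤ T → ∀ ε : ℝ, 0 < ε → ∃ A : ℝ,
      ∀ n, t ≤ d n → ∫ ω in {ω | A ≤ |X n t ω|}, |X n t ω| ∂P ≤ ε)
    {η : ℝ} (hη : 0 < η) :
    ∃ A > 0, ∀ n, ∀ t ∈ Icc 1 (d n), ∫ ω, |X n t ω - truncation (X n t) A ω| ∂P ≤ η := by
  have hcol : ∀ r ∈ Icc 1 T, ∀ᶠ A in atTop,
      ∀ n, r ≤ d n → ∫ ω, |X n r ω - truncation (X n r) A ω| ∂P ≤ η := by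
    intro r hr
    obtain ⟨A₀, hA₀⟩ := hUI r (mem_Icc.1 hr).1 (mem_Icc.1 hr).2 η hη
    filter_upwards [eventually_ge_atTop A₀] with A hA n hn
    exact (integral_abs_sub_truncation_le (hint n r (mem_Icc.1 hr).1 hn) (hXm n r) hA).trans
      (hA₀ n hn)
  obtain ⟨A, hA, hAcol⟩ := ((eventually_gt_atTop 0).and ((eventually_all_finset _).2 hcol)).exists
  refine ⟨A, hA, fun n t ht => ?_⟩
  rw [mem_Icc] at ht
  have hu : Measurable fun x => |x - truncation id A x| :=
    (measurable_id.sub (measurable_truncation_id A)).abs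
  have hr : (t - 1) % T + 1 ∈ Icc 1 T := mem_Icc.2 ⟨le_add_self, Nat.mod_lt _ hT⟩
  have hrt : (t - 1) % T + 1 ≤ t := by have := Nat.mod_le (t - 1) T; omega
  calc ∫ ω, |X n t ω - truncation (X n t) A ω| ∂P
      = ∫ ω, |X n ((t - 1) % T + 1) ω - truncation (X n ((t - 1) % T + 1)) A ω| ∂P :=
        ((identDistrib_mod_period (hXm n) (hSP1 n) ht.1 ht.2).comp hu).integral_eq
    _ ≤ η := hAcol _ hr n (hrt.trans ht.2)

theorem tendsto_average_integral (hT : 0 < T) (hd : Tendsto d atTop atTop)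
    (hXm : ∀ n t, Measurable (X n t))
    (hSP1 : ∀ n t, 1 ≤ t → t + T ≤ d n →
      Measure.map (X n t) P = Measure.map (X n (t + T)) P)
    {μt : ℕ → ℝ} (hμt : ∀ t, 1 ≤ t → t ≤ T →
      Tendsto (fun n => ∫ ω, X n t ω ∂P) atTop (𝓝 (μt t))) :
    Tendsto (fun n => (d n : ℝ)⁻¹ * ∑ t ∈ Icc 1 (d n), ∫ ω, X n t ω ∂P) atTop
      (𝓝 ((T : ℝ)⁻¹ * ∑ t ∈ Icc 1 T, μt t)) := by
  have hperiodic (n : ℕ) : ∑ t ∈ Icc 1 (d n), ∫ ω, X n t ω ∂P =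
      ∑ i ∈ range (d n), ∫ ω, X n (i % T + 1) ω ∂P := by
    rw [sum_Icc_one_eq_sum_range]
    refine sum_congr rfl fun i hi => ?_
    simpa using (identDistrib_mod_period (hXm n) (hSP1 n) (t := i + 1) (by omega)
      (mem_range.1 hi)).integral_eq
  simp_rw [hperiodic, sum_Icc_one_eq_sum_range μt]
  exact tendsto_average_mod (w := fun n j => ∫ ω, X n (j + 1) ω ∂P) hT hd
    fun j hj => hμt (j + 1) le_add_self hj

end TriangularArray

theorem triangular_array_wlln_general
    (P : Measure Ω) [IsProbabilityMeasure P]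
    (d : ℕ → ℕ) (hd : Tendsto d atTop atTop)
    (X : ℕ → ℕ → Ω → ℝ)
    (hXm : ∀ n t, Measurable (X n t))
    (hint : ∀ n t, 1 ≤ t → t ≤ d n → Integrable (X n t) P)
    (T : ℕ) (hT : 0 < T)
    (hSP1 : ∀ n t, 1 ≤ t → t + T ≤ d n →
      Measure.map (X n t) P = Measure.map (X n (t + T)) P)
    (hUI : ∀ t, 1 ≤ t → t ≤ T → ∀ ε : ℝ, 0 < ε → ∃ A : ℝ,
      ∀ n, t ≤ d n → ∫ ω in {ω | A ≤ |X n t ω|}, |X n t ω| ∂P ≤ ε)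
    (μt : ℕ → ℝ)
    (hμt : ∀ t, 1 ≤ t → t ≤ T →
      Tendsto (fun n => ∫ ω, X n t ω ∂P) atTop (𝓝 (μt t)))
    (a : ℕ → ℕ → ℝ)
    (haC : Tendsto (fun n => (d n : ℝ)⁻¹ * ∑ τ ∈ Finset.range (d n), a n τ) atTop (𝓝 0))
    (hcov : ∀ A : ℝ, 0 < A → ∀ n t τ, 1 ≤ t → t + τ ≤ d n →
      ∀ g h : ℝ → ℝ, Measurable g → Measurable h →
        (∀ x, |g x| ≤ A) → (∀ x, |h x| ≤ A) →
        |cov P (fun ω => g (X n t ω)) (fun ω => h (X n (t + τ) ω))| ≤ A ^ 2 * a n τ) :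
    ∀ ε : ℝ, 0 < ε →
      Tendsto
        (fun n => P {ω | ε ≤ |(d n : ℝ)⁻¹ * (∑ t ∈ Finset.Icc 1 (d n), X n t ω) -
          (T : ℝ)⁻¹ * ∑ t ∈ Finset.Icc 1 T, μt t|})
        atTop (𝓝 0) := by
  intro ε hε
  have hmean := Metric.tendsto_nhds.1 (tendsto_average_integral hT hd hXm hSP1 hμt) (ε / 4)
    (by positivity)
  refine ENNReal.tendsto_nhds_zero_of_eventually_le_add fun δ hδ => ?_
  -- `η ≤ ε / 4` serves the mean condition, `η ≤ δ ε / 4` makes the Markov term at most `δ`.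
  set η := min (ε / 4) (δ * (ε / 4))
  have hη : 0 < η := by positivity
  obtain ⟨A, hA, htrunc⟩ := exists_truncation_level hT hXm hint hSP1 hUI hη
  have hbound (x : ℝ) : |truncation id A x| ≤ A :=
    (abs_truncation_le_bound id A x).trans_eq (abs_of_pos hA)
  have hcovA (n t τ : ℕ) (h₁ : 1 ≤ t) (h₂ : t + τ ≤ d n) :
      |cov P (truncation (X n t) A) (truncation (X n (t + τ)) A)| ≤ A ^ 2 * a n τ :=
    hcov A hA n t τ h₁ h₂ _ _ (measurable_truncation_id A) (measurable_truncation_id A)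
      hbound hbound
  refine ⟨fun n => ENNReal.ofReal (2 * ((d n : ℝ)⁻¹ * ∑ τ ∈ range (d n), A ^ 2 * a n τ) /
    (ε / 4) ^ 2), ?_, ?_⟩
  · simp_rw [← mul_sum, mul_left_comm _ (A ^ 2)]
    simpa using ENNReal.tendsto_ofReal (((haC.const_mul 2).const_mul (A ^ 2)).div_const _)
  · filter_upwards [hmean] with n hn
    refine (measure_abs_average_sub_ge_le
      (fun t ht => hint n t (mem_Icc.1 ht).1 (mem_Icc.1 ht).2) (htrunc n) (hcovA n) hε hη.le
      ?_).trans ?_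
    · rw [Real.dist_eq] at hn
      linarith [min_le_left (ε / 4) (δ * (ε / 4))]
    · gcongr
      exact (div_le_iff₀ (by positivity)).2 (min_le_right _ _)

/-- **Lemma A.4**: weak law of large numbers for a row-wise `SP(1)` triangular array with
uniformly integrable columns, convergent column means, and a covariance bound for bounded
truncations with Cesàro-negligible constants. -/
theorem triangular_array_wlln
    (P : Measure Ω) [IsProbabilityMeasure P]
    (d : ℕ → ℕ) (hd : Tendsto d atTop atTop)
    (X : ℕ → ℕ → Ω → ℝ)
    (hXm : ∀ n t, Measurable (X n t))
    (hint : ∀ n t, 1 ≤ t → t ≤ d n → Integrable (X n t) P)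
    (T : ℕ) (hT : 0 < T)
    (hSP1 : ∀ n t, 1 ≤ t → t + T ≤ d n →
      Measure.map (X n t) P = Measure.map (X n (t + T)) P)
    (hUI : ∀ t, 1 ≤ t → t ≤ T → ∀ ε : ℝ, 0 < ε → ∃ A : ℝ,
      ∀ n, t ≤ d n → ∫ ω in {ω | A ≤ |X n t ω|}, |X n t ω| ∂P ≤ ε)
    (μt : ℕ → ℝ)
    (hμt : ∀ t, 1 ≤ t → t ≤ T →
      Tendsto (fun n => ∫ ω, X n t ω ∂P) atTop (𝓝 (μt t)))
    (a : ℕ → ℕ → ℝ) (ha0 : ∀ n τ, 0 ≤ a n τ)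
    (haC : Tendsto (fun n => (d n : ℝ)⁻¹ * ∑ τ ∈ Finset.range (d n), a n τ) atTop (𝓝 0))
    (hcov : ∀ A : ℝ, 0 < A → ∀ n t τ, 1 ≤ t → t + τ ≤ d n →
      ∀ g h : ℝ → ℝ, Measurable g → Measurable h →
        (∀ x, |g x| ≤ A) → (∀ x, |h x| ≤ A) →
        |cov P (fun ω => g (X n t ω)) (fun ω => h (X n (t + τ) ω))| ≤ A ^ 2 * a n τ) :
    ∀ ε : ℝ, 0 < ε →
      Tendsto
        (fun n => P {ω | ε ≤ |(d n : ℝ)⁻¹ * (∑ t ∈ Finset.Icc 1 (d n), X n t ω) -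
          (T : ℝ)⁻¹ * ∑ t ∈ Finset.Icc 1 T, μt t|})
        atTop (𝓝 0) :=
  triangular_array_wlln_general P d hd X hXm hint T hT hSP1 hUI μt hμt a haC hcov
end
end

section
/- Let {X_t : t ∈ ℤ} be a real-valued almost periodically correlated (APC) time series whose autocovariance function is uniformly summable: there exists a summable sequence {c_τ}_{τ=0}^∞ of real numbers such that |Cov(X_t, X_{t+τ})| ≤ c_τ for all t ∈ ℤ and τ ≥ 0. Then there exists a number σ² such that for every sequence b = b(n) ≤ n tending to infinity, sup_{s=1,…,n−b+1} | Var( b^{−1/2} Σ_{t=s}^{s+b−1} X_t ) − σ² | → 0 as n → ∞. -/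
open MeasureTheory Filter Topology

noncomputable section

variable {Ω : Type*} [MeasurableSpace Ω]

/-- An almost periodic sequence (Bohr/Bochner, discrete version): for every `ε > 0` there is a
length `l` such that every set of `l` consecutive integers contains an `ε`-almost period. -/
def AlmostPeriodicSeq {E : Type*} [SeminormedAddCommGroup E] (f : ℤ → E) : Prop :=
  ∀ ε : ℝ, 0 < ε → ∃ l : ℕ, 0 < l ∧ ∀ a : ℤ, ∃ p : ℤ,
    a ≤ p ∧ p < a + l ∧ ∀ t : ℤ, ‖f (t + p) - f t‖ < ε

/-- Almost periodically correlated (APC) time series: square integrable, with almost periodic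
mean function and almost periodic second-order moment functions. -/
def APC (P : Measure Ω) (X : ℤ → Ω → ℝ) : Prop :=
  (∀ t : ℤ, Integrable (fun ω => (X t ω) ^ 2) P) ∧
  AlmostPeriodicSeq (fun t => ∫ ω, X t ω ∂P) ∧
  ∀ τ : ℤ, AlmostPeriodicSeq (fun t => ∫ ω, X t ω * X (t + τ) ω ∂P)

/-!
Sliding a block by an `ε`-almost period of `f` moves its mean by at most `ε`, and any two starting
points are within one window length `l` of such a slide; hence
`|mean f s (m * n) - mean f s' n| ≤ ε + 2 l M / n`, which makes the block means of an almost
periodic sequence uniformly Cauchy in the starting point. The autocovariance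
`t ↦ Cov(X_t, X_{t+τ})` is a difference of two almost periodic sequences, so its block means
converge uniformly to some `γ τ`. Grouping the variance of a block sum by lags,
`Var(b^{-1/2} ∑_{j<b} X_{s+j}) = 2 ∑_{τ<b} b⁻¹ ∑_{i<b-τ} Cov(X_{s+i}, X_{s+i+τ}) - (mean variance)`,
and the lag-`τ` term is bounded by `c τ`, so Tannery's theorem gives `σ² = 2 ∑ γ τ - γ 0`.
Uniformity in `s` is expressed throughout as convergence along `atTop ×ˢ ⊤`.
-/

open Finset ProbabilityTheory

section BlockSums

variable {f g : ℤ → ℝ} {M : ℝ} {s : ℤ} {n : ℕ}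

def blockSum (f : ℤ → ℝ) (s : ℤ) (n : ℕ) : ℝ :=
  ∑ j ∈ range n, f (s + j)

def blockMean (f : ℤ → ℝ) (s : ℤ) (n : ℕ) : ℝ :=
  (n : ℝ)⁻¹ * blockSum f s n

theorem blockSum_eq_mul_blockMean : blockSum f s n = n * blockMean f s n := by
  rcases eq_or_ne n 0 with rfl | hn
  · simp [blockSum]
  · simp [blockMean, hn]

theorem blockMean_sub : blockMean (fun t => f t - g t) s n = blockMean f s n - blockMean g s n := by
  simp only [blockMean, blockSum, sum_sub_distrib, mul_sub]

theorem abs_blockSum_le (hM : ∀ t, |f t| ≤ M) : |blockSum f s n| ≤ n * M := by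
  calc |blockSum f s n| ≤ ∑ j ∈ range n, |f (s + j)| := abs_sum_le_sum_abs _ _
    _ ≤ n * M := by simpa using sum_le_card_nsmul (range n) _ M fun j _ => hM (s + j)

theorem abs_blockMean_le (hM : ∀ t, |f t| ≤ M) : |blockMean f s n| ≤ M := by
  rcases eq_or_ne n 0 with rfl | hn
  · simpa [blockMean] using (abs_nonneg _).trans (hM 0)
  · rw [blockMean, abs_mul, abs_inv, Nat.abs_cast, inv_mul_le_iff₀ (by positivity)]
    exact abs_blockSum_le hM

theorem blockSum_add_one_sub : blockSum f (s + 1) n - blockSum f s n = f (s + n) - f s := by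
  rw [blockSum, blockSum, ← sum_sub_distrib]
  convert sum_range_sub (fun i : ℕ => f (s + i)) n using 2 <;> push_cast <;> ring_nf

theorem abs_blockSum_add_sub_le (hM : ∀ t, |f t| ≤ M) (d : ℕ) :
    |blockSum f (s + d) n - blockSum f s n| ≤ 2 * d * M := by
  induction d with
  | zero => simp
  | succ d ih =>
    have hstep : |blockSum f (s + d + 1) n - blockSum f (s + d) n| ≤ 2 * M := by
      rw [blockSum_add_one_sub]
      linarith [abs_sub (f (s + d + n)) (f (s + d)), hM (s + d + n), hM (s + d)]
    calc |blockSum f (s + ↑(d + 1)) n - blockSum f s n|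
        ≤ |blockSum f (s + d + 1) n - blockSum f (s + d) n|
          + |blockSum f (s + d) n - blockSum f s n| := by
          push_cast; rw [← add_assoc]; exact abs_sub_le _ _ _
      _ ≤ 2 * ↑(d + 1) * M := by push_cast; linarith

theorem abs_blockSum_add_sub_le_of_almostPeriod {p : ℤ} {ε : ℝ} (hp : ∀ t, |f (t + p) - f t| ≤ ε) :
    |blockSum f (s + p) n - blockSum f s n| ≤ n * ε := by
  have : blockSum f (s + p) n - blockSum f s n = blockSum (fun t => f (t + p) - f t) s n := by
    simp only [blockSum, sum_sub_distrib, add_right_comm]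
  exact this ▸ abs_blockSum_le hp

theorem blockSum_mul (m : ℕ) : blockSum f s (m * n) = ∑ k ∈ range m, blockSum f (s + k * n) n := by
  induction m with
  | zero => simp [blockSum]
  | succ m ih =>
    rw [add_mul, one_mul, sum_range_succ, ← ih, blockSum, sum_range_add]
    congr 1
    refine sum_congr rfl fun j _ => ?_
    push_cast
    ring_nf

end BlockSums

section AlmostPeriodic

variable {f : ℤ → ℝ} {M ε : ℝ} {l : ℕ}

theorem abs_blockSum_sub_le_of_almostPeriods (hM : ∀ t, |f t| ≤ M)
    (hap : ∀ a : ℤ, ∃ p : ℤ, a ≤ p ∧ p < a + l ∧ ∀ t, |f (t + p) - f t| < ε) (s s' : ℤ) (n : ℕ) :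
    |blockSum f s n - blockSum f s' n| ≤ n * ε + 2 * l * M := by
  obtain ⟨p, hp₁, hp₂, hp⟩ := hap (s' - s)
  obtain ⟨d, hd⟩ : ∃ d : ℕ, s + p = s' + d := ⟨(s + p - s').toNat, by omega⟩
  have hdl : (d : ℝ) ≤ l := by exact_mod_cast (show d ≤ l by omega)
  have hM0 : 0 ≤ M := (abs_nonneg _).trans (hM 0)
  have hshift := abs_blockSum_add_sub_le_of_almostPeriod (s := s) (n := n) fun t => (hp t).le
  have hslide := abs_blockSum_add_sub_le hM d (s := s') (n := n)
  rw [hd] at hshift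
  calc |blockSum f s n - blockSum f s' n|
      ≤ |blockSum f (s' + d) n - blockSum f s n| + |blockSum f (s' + d) n - blockSum f s' n| := by
        rw [abs_sub_comm (blockSum f (s' + d) n)]; exact abs_sub_le _ _ _
    _ ≤ n * ε + 2 * l * M := by nlinarith

theorem abs_blockMean_mul_sub_le_of_almostPeriods (hM : ∀ t, |f t| ≤ M)
    (hap : ∀ a : ℤ, ∃ p : ℤ, a ≤ p ∧ p < a + l ∧ ∀ t, |f (t + p) - f t| < ε) (s s' : ℤ)
    {m n : ℕ} (hm : 0 < m) (hn : 0 < n) :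
    |blockMean f s (m * n) - blockMean f s' n| ≤ ε + 2 * l * M / n := by
  have hmR : (0 : ℝ) < m := by exact_mod_cast hm
  have hnR : (0 : ℝ) < n := by exact_mod_cast hn
  have hsplit : blockMean f s (m * n) - blockMean f s' n
      = ((m : ℝ) * n)⁻¹ * ∑ k ∈ range m, (blockSum f (s + k * n) n - blockSum f s' n) := by
    rw [blockMean, blockMean, blockSum_mul, sum_sub_distrib, sum_const, card_range, nsmul_eq_mul]
    push_cast
    field_simp
  have hsum : |∑ k ∈ range m, (blockSum f (s + k * n) n - blockSum f s' n)|
      ≤ m * (n * ε + 2 * l * M) := by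
    refine (abs_sum_le_sum_abs _ _).trans ((sum_le_card_nsmul (range m) _ _ fun k _ =>
      abs_blockSum_sub_le_of_almostPeriods hM hap (s + k * n) s' n).trans_eq ?_)
    simp [mul_add]
  rw [hsplit, abs_mul, abs_of_pos (by positivity)]
  calc ((m : ℝ) * n)⁻¹ * |∑ k ∈ range m, (blockSum f (s + k * n) n - blockSum f s' n)|
      ≤ ((m : ℝ) * n)⁻¹ * (m * (n * ε + 2 * l * M)) := by gcongr
    _ = ε + 2 * l * M / n := by field_simp

namespace AlmostPeriodicSeq

theorem exists_abs_le (hf : AlmostPeriodicSeq f) : ∃ M, ∀ t, |f t| ≤ M := by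
  obtain ⟨l, -, hl⟩ := hf 1 one_pos
  refine ⟨∑ j ∈ range l, |f j| + 1, fun t => ?_⟩
  obtain ⟨p, hp₁, hp₂, hp⟩ := hl (t - l + 1)
  have hmem : (t - p).toNat ∈ range l := by rw [mem_range]; omega
  have hbase : |f (t - p)| ≤ ∑ j ∈ range l, |f j| := by
    have := single_le_sum (f := fun j : ℕ => |f j|) (fun j _ => abs_nonneg _) hmem
    rwa [Int.toNat_of_nonneg (by omega)] at this
  have hclose : |f t - f (t - p)| < 1 := by simpa using hp (t - p)
  linarith [abs_sub_abs_le_abs_sub (f t) (f (t - p))]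

theorem mul_shift (hf : AlmostPeriodicSeq f) (τ : ℤ) :
    AlmostPeriodicSeq fun t => f t * f (t + τ) := by
  obtain ⟨M, hM⟩ := hf.exists_abs_le
  have hM0 : 0 ≤ M := (abs_nonneg _).trans (hM 0)
  intro ε hε
  obtain ⟨l, hl, hap⟩ := hf (ε / (2 * M + 1)) (by positivity)
  refine ⟨l, hl, fun a => ?_⟩
  obtain ⟨p, hp₁, hp₂, hp⟩ := hap a
  refine ⟨p, hp₁, hp₂, fun t => ?_⟩
  simp only [Real.norm_eq_abs] at hp ⊢
  calc |f (t + p) * f (t + p + τ) - f t * f (t + τ)|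
      = |f (t + p) * (f (t + τ + p) - f (t + τ)) + f (t + τ) * (f (t + p) - f t)| := by
        rw [add_right_comm t p τ]; ring_nf
    _ ≤ M * (ε / (2 * M + 1)) + M * (ε / (2 * M + 1)) := by
        refine (abs_add_le _ _).trans (add_le_add ?_ ?_) <;> rw [abs_mul] <;>
          exact mul_le_mul (hM _) (hp _).le (abs_nonneg _) hM0
    _ < ε := by
        rw [← two_mul, ← mul_assoc, mul_div_assoc', div_lt_iff₀ (by positivity)]
        nlinarith

theorem uniformCauchy_blockMean (hf : AlmostPeriodicSeq f) :
    ∀ ε > 0, ∃ N, ∀ n ≥ N, ∀ n' ≥ N, ∀ s s', dist (blockMean f s n) (blockMean f s' n') < ε := by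
  intro ε hε
  obtain ⟨M, hM⟩ := hf.exists_abs_le
  have hM0 : 0 ≤ M := (abs_nonneg _).trans (hM 0)
  obtain ⟨l, -, hap⟩ := hf (ε / 4) (by positivity)
  simp only [Real.norm_eq_abs] at hap
  obtain ⟨N, hN⟩ := exists_nat_gt (8 * l * M / ε)
  have hN0 : 0 < N := by exact_mod_cast (div_nonneg (by positivity) hε.le).trans_lt hN
  have hsmall : ∀ n ≥ N, 2 * l * M / n < ε / 4 := fun n hn => by
    have hnR : (N : ℝ) ≤ n := by exact_mod_cast hn
    have hN0R : (0 : ℝ) < N := by exact_mod_cast hN0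
    rw [div_lt_iff₀ (by linarith)]
    rw [div_lt_iff₀ hε] at hN
    nlinarith
  refine ⟨N, fun n hn n' hn' s s' => ?_⟩
  have h₁ := abs_blockMean_mul_sub_le_of_almostPeriods hM hap s' s (m := n') (n := n) (by omega)
    (by omega)
  have h₂ := abs_blockMean_mul_sub_le_of_almostPeriods hM hap s' s' (m := n) (n := n') (by omega)
    (by omega)
  rw [mul_comm] at h₂
  rw [Real.dist_eq]
  calc |blockMean f s n - blockMean f s' n'|
      ≤ |blockMean f s' (n' * n) - blockMean f s n|
          + |blockMean f s' (n' * n) - blockMean f s' n'| := by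
        rw [abs_sub_comm (blockMean f s' (n' * n))]; exact abs_sub_le _ _ _
    _ < ε := by linarith [hsmall n hn, hsmall n' hn']

end AlmostPeriodicSeq

end AlmostPeriodic

theorem exists_tendsto_prod_top_of_uniformCauchy {ι β : Type*} [Nonempty ι] [PseudoMetricSpace β]
    [CompleteSpace β] {F : ℕ → ι → β}
    (hF : ∀ ε > 0, ∃ N, ∀ n ≥ N, ∀ n' ≥ N, ∀ s s', dist (F n s) (F n' s') < ε) :
    ∃ L, Tendsto (fun q : ℕ × ι => F q.1 q.2) (atTop ×ˢ ⊤) (𝓝 L) := by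
  refine cauchy_map_iff_exists_tendsto.1 (Metric.cauchy_iff.2 ⟨inferInstance, fun ε hε => ?_⟩)
  obtain ⟨N, hN⟩ := hF ε hε
  refine ⟨(fun q : ℕ × ι => F q.1 q.2) '' (Set.Ici N ×ˢ Set.univ),
    image_mem_map (prod_mem_prod (Ici_mem_atTop N) univ_mem), ?_⟩
  rintro _ ⟨⟨n, s⟩, ⟨hn, -⟩, rfl⟩ _ ⟨⟨n', s'⟩, ⟨hn', -⟩, rfl⟩
  exact hN n hn n' hn' s s'

theorem tendsto_iSup_abs_sub_of_tendsto_prod_top {α ι : Type*} {l : Filter α} {F : α → ι → ℝ}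
    {L : ℝ} (hF : Tendsto (fun q : α × ι => F q.1 q.2) (l ×ˢ ⊤) (𝓝 L)) (p : α → ι → Prop) :
    Tendsto (fun n => ⨆ s, ⨆ _ : p n s, |F n s - L|) l (𝓝 0) := by
  rw [Metric.tendsto_nhds] at hF ⊢
  intro ε hε
  have hev := hF (ε / 2) (by positivity)
  rw [← principal_univ, eventually_prod_principal_iff] at hev
  filter_upwards [hev] with n hn
  have hle : (⨆ s, ⨆ _ : p n s, |F n s - L|) ≤ ε / 2 :=
    Real.iSup_le (fun s => Real.iSup_le (fun _ => (hn s trivial).le) (by positivity))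
      (by positivity)
  have hnonneg : 0 ≤ ⨆ s, ⨆ _ : p n s, |F n s - L| :=
    Real.iSup_nonneg fun s => Real.iSup_nonneg fun _ => abs_nonneg _
  rw [Real.dist_eq, sub_zero, abs_of_nonneg hnonneg]
  linarith

theorem AlmostPeriodicSeq.exists_tendsto_blockMean {f : ℤ → ℝ} (hf : AlmostPeriodicSeq f) :
    ∃ L, Tendsto (fun q : ℕ × ℤ => blockMean f q.2 q.1) (atTop ×ˢ ⊤) (𝓝 L) :=
  exists_tendsto_prod_top_of_uniformCauchy hf.uniformCauchy_blockMean

theorem tendsto_inv_mul_blockSum_sub {f : ℤ → ℝ} {L : ℝ}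
    (hf : Tendsto (fun q : ℕ × ℤ => blockMean f q.2 q.1) (atTop ×ˢ ⊤) (𝓝 L)) (τ : ℕ) :
    Tendsto (fun q : ℕ × ℤ => (q.1 : ℝ)⁻¹ * blockSum f q.2 (q.1 - τ)) (atTop ×ˢ ⊤) (𝓝 L) := by
  have hratio : Tendsto (fun b : ℕ => ((b - τ : ℕ) : ℝ) / b) atTop (𝓝 1) := by
    have h : Tendsto (fun b : ℕ => 1 - (τ : ℝ) / b) atTop (𝓝 1) := by
      simpa using tendsto_const_nhds.sub (tendsto_const_div_atTop_nhds_zero_nat (τ : ℝ))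
    refine h.congr' ?_
    filter_upwards [eventually_gt_atTop τ] with b hb
    have hbR : (0 : ℝ) < b := by exact_mod_cast (Nat.zero_lt_of_lt hb)
    rw [Nat.cast_sub hb.le]
    field_simp
  have hmean : Tendsto (fun q : ℕ × ℤ => blockMean f q.2 (q.1 - τ)) (atTop ×ˢ ⊤) (𝓝 L) :=
    hf.comp (f := Prod.map (· - τ) id) ((tendsto_sub_atTop_nat τ).prodMap tendsto_id)
  have := (hratio.comp tendsto_fst).mul hmean
  rw [one_mul] at this
  refine this.congr fun q => ?_
  simp only [Function.comp_apply, blockSum_eq_mul_blockMean, div_eq_inv_mul, mul_assoc]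

theorem tendsto_sum_range_inv_mul_blockSum {φ : ℕ → ℤ → ℝ} {g c : ℕ → ℝ} (hc : Summable c)
    (hφc : ∀ τ t, |φ τ t| ≤ c τ)
    (hg : ∀ τ, Tendsto (fun q : ℕ × ℤ => blockMean (φ τ) q.2 q.1) (atTop ×ˢ ⊤) (𝓝 (g τ))) :
    Tendsto (fun q : ℕ × ℤ => ∑ τ ∈ range q.1, (q.1 : ℝ)⁻¹ * blockSum (φ τ) q.2 (q.1 - τ))
      (atTop ×ˢ ⊤) (𝓝 (∑' τ, g τ)) := by
  have hbound : ∀ (b : ℕ) (s : ℤ) τ, |(b : ℝ)⁻¹ * blockSum (φ τ) s (b - τ)| ≤ c τ := by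
    intro b s τ
    have hratio : |(b : ℝ)⁻¹ * (b - τ : ℕ)| ≤ 1 := by
      rcases eq_or_ne b 0 with rfl | hb
      · simp
      rw [abs_of_nonneg (by positivity), inv_mul_le_one₀ (by positivity)]
      exact_mod_cast Nat.sub_le b τ
    rw [blockSum_eq_mul_blockMean, ← mul_assoc, abs_mul]
    simpa using mul_le_mul hratio (abs_blockMean_le (hφc τ)) (abs_nonneg _) zero_le_one
  have htsum : ∀ q : ℕ × ℤ, ∑ τ ∈ range q.1, (q.1 : ℝ)⁻¹ * blockSum (φ τ) q.2 (q.1 - τ)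
      = ∑' τ, (q.1 : ℝ)⁻¹ * blockSum (φ τ) q.2 (q.1 - τ) := fun q =>
    (tsum_eq_sum fun τ hτ => by
      simp [blockSum, Nat.sub_eq_zero_of_le (not_lt.1 (mem_range.not.1 hτ))]).symm
  simp only [htsum]
  exact tendsto_tsum_of_dominated_convergence hc (fun τ => tendsto_inv_mul_blockSum_sub (hg τ) τ)
    (Eventually.of_forall fun q τ => hbound q.1 q.2 τ)

theorem sum_range_succ_sum_range_sub {R : Type*} [AddCommMonoid R] (F : ℕ → ℕ → R) (b : ℕ) :
    ∑ τ ∈ range (b + 1), ∑ i ∈ range (b + 1 - τ), F i (i + τ)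
      = ∑ τ ∈ range b, ∑ i ∈ range (b - τ), F i (i + τ) + ∑ i ∈ range (b + 1), F i b := by
  have hinner : ∀ τ ∈ range (b + 1), ∑ i ∈ range (b + 1 - τ), F i (i + τ)
      = ∑ i ∈ range (b - τ), F i (i + τ) + F (b - τ) b := by
    intro τ hτ
    rw [mem_range] at hτ
    rw [show b + 1 - τ = b - τ + 1 by omega, sum_range_succ, Nat.sub_add_cancel (by omega)]
  rw [sum_congr rfl hinner, sum_add_distrib, sum_range_succ (fun τ => ∑ i ∈ range (b - τ), _),
    Nat.sub_self, range_zero, sum_empty, add_zero]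
  congr 1
  simpa using sum_range_reflect (fun i => F i b) (b + 1)

theorem sum_range_sum_range_eq_of_symm {R : Type*} [CommRing R] (F : ℕ → ℕ → R)
    (hF : ∀ i j, F i j = F j i) (b : ℕ) :
    ∑ i ∈ range b, ∑ j ∈ range b, F i j
      = 2 * ∑ τ ∈ range b, ∑ i ∈ range (b - τ), F i (i + τ) - ∑ i ∈ range b, F i i := by
  induction b with
  | zero => simp
  | succ b ih =>
    have hrow : ∑ j ∈ range b, F b j = ∑ j ∈ range b, F j b := sum_congr rfl fun j _ => hF b j
    rw [sum_range_succ_sum_range_sub]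
    simp only [sum_range_succ, sum_add_distrib, ih, hrow]
    ring

theorem cov_comm (P : Measure Ω) (f g : Ω → ℝ) : cov P f g = cov P g f := by
  simp only [cov, mul_comm]

def autocov (P : Measure Ω) (X : ℤ → Ω → ℝ) (τ : ℕ) (t : ℤ) : ℝ :=
  cov P (X t) (X (t + τ))

section Covariance

variable {P : Measure Ω} [IsProbabilityMeasure P]

theorem cov_eq_covariance {f g : Ω → ℝ} (hf : MemLp f 2 P) (hg : MemLp g 2 P) :
    cov P f g = covariance f g P :=
  (covariance_eq_sub hf hg).symm

theorem cov_const_mul_sum_self {ι : Type*} {Y : ι → Ω → ℝ} {S : Finset ι}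
    (hY : ∀ i ∈ S, MemLp (Y i) 2 P) (a : ℝ) :
    cov P (fun ω => a * ∑ i ∈ S, Y i ω) (fun ω => a * ∑ i ∈ S, Y i ω)
      = a ^ 2 * ∑ i ∈ S, ∑ j ∈ S, cov P (Y i) (Y j) := by
  have hsum : MemLp (fun ω => a * ∑ i ∈ S, Y i ω) 2 P := (memLp_finsetSum S hY).const_mul a
  rw [cov_eq_covariance hsum hsum, covariance_const_mul_left, covariance_const_mul_right,
    covariance_fun_sum_fun_sum' hY hY, sq, mul_assoc]
  congr 2
  exact sum_congr rfl fun i hi => sum_congr rfl fun j hj =>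
    (cov_eq_covariance (hY i hi) (hY j hj)).symm

theorem cov_blockSum_self_eq {X : ℤ → Ω → ℝ} (hX : ∀ t, MemLp (X t) 2 P) (s : ℤ) (b : ℕ) :
    cov P (fun ω => (√b)⁻¹ * ∑ j ∈ range b, X (s + j) ω)
        (fun ω => (√b)⁻¹ * ∑ j ∈ range b, X (s + j) ω)
      = 2 * ∑ τ ∈ range b, (b : ℝ)⁻¹ * blockSum (autocov P X τ) s (b - τ)
        - blockMean (autocov P X 0) s b := by
  rw [cov_const_mul_sum_self (fun j _ => hX _), inv_pow, Real.sq_sqrt (Nat.cast_nonneg b),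
    sum_range_sum_range_eq_of_symm _ (fun i j => cov_comm P _ _)]
  simp only [blockMean, blockSum, autocov, Nat.cast_add, Nat.cast_zero, add_zero, add_assoc,
    mul_sub, mul_sum, mul_left_comm]

end Covariance

theorem APC.exists_tendsto_blockMean_autocov {P : Measure Ω} {X : ℤ → Ω → ℝ} (hX : APC P X)
    (τ : ℕ) :
    ∃ L, Tendsto (fun q : ℕ × ℤ => blockMean (autocov P X τ) q.2 q.1) (atTop ×ˢ ⊤) (𝓝 L) := by
  obtain ⟨-, hmean, hmom⟩ := hX
  obtain ⟨L₁, h₁⟩ := (hmom τ).exists_tendsto_blockMean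
  obtain ⟨L₂, h₂⟩ := (hmean.mul_shift τ).exists_tendsto_blockMean
  refine ⟨L₁ - L₂, (h₁.sub h₂).congr fun q => ?_⟩
  rw [← blockMean_sub]
  rfl

/-- **Lemma A.6**: for an APC time series with uniformly summable autocovariance function,
the variances of normalized block sums converge, uniformly over the block starting point,
to a common limit `σ²`. -/
theorem apc_block_variance_uniform_limit
    (P : Measure Ω) [IsProbabilityMeasure P]
    (X : ℤ → Ω → ℝ) (hXm : ∀ t, Measurable (X t))
    (hAPC : APC P X)
    (c : ℕ → ℝ) (hc : Summable c)
    (hcov : ∀ (t : ℤ) (τ : ℕ), |cov P (X t) (X (t + τ))| ≤ c τ) :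
    ∃ σ2 : ℝ, ∀ b : ℕ → ℕ, (∀ n, b n ≤ n) → Tendsto b atTop atTop →
      Tendsto
        (fun n => ⨆ s ∈ Finset.Icc 1 (n - b n + 1),
          |cov P
            (fun ω => (Real.sqrt (b n))⁻¹ * ∑ j ∈ Finset.range (b n), X ((s : ℤ) + j) ω)
            (fun ω => (Real.sqrt (b n))⁻¹ * ∑ j ∈ Finset.range (b n), X ((s : ℤ) + j) ω)
            - σ2|)
        atTop (𝓝 0) := by
  have hX2 : ∀ t, MemLp (X t) 2 P := fun t =>
    (memLp_two_iff_integrable_sq (hXm t).aestronglyMeasurable).2 (hAPC.1 t)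
  choose g hg using hAPC.exists_tendsto_blockMean_autocov
  refine ⟨2 * ∑' τ, g τ - g 0, fun b _ hb => ?_⟩
  have hV : Tendsto (fun q : ℕ × ℤ => cov P
      (fun ω => (√(q.1 : ℝ))⁻¹ * ∑ j ∈ range q.1, X (q.2 + j) ω)
      (fun ω => (√(q.1 : ℝ))⁻¹ * ∑ j ∈ range q.1, X (q.2 + j) ω))
      (atTop ×ˢ ⊤) (𝓝 (2 * ∑' τ, g τ - g 0)) := by
    simp only [cov_blockSum_self_eq hX2]
    exact ((tendsto_sum_range_inv_mul_blockSum hc (fun τ t => hcov t τ) hg).const_mul 2).sub (hg 0)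
  exact tendsto_iSup_abs_sub_of_tendsto_prod_top
    (hV.comp (f := Prod.map b Nat.cast) (hb.prodMap tendsto_top)) _
end
end
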